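/- For every multigraph G and every function f : V(G) → ℕ with f(v) ≥ 1 for all v, if G is bipartite or f(v) is even for all v, then the list f-chromatic index equals the f-chromatic index: χ'_{f,ℓ}(G) = χ'_f(G). -/

import Mathlib

/-!
Galvin's method. Orient every colour class of an `f`-colouring with `k` colours so that each
vertex `v` has in-degree at most `g v` and out-degree at most `h v` in it, where `g + h ≤ f`: from
one side to the other if `G` is bipartite, and by a balanced orientation with `g = h = f / 2` if
`f` is even. Splitting every vertex `v` into `h v` tail copies and `g v` head copies, according to
the position of an edge in its colour class, makes each class a matching of a bipartite multigraph.
By Galvin's theorem (a stable matching is a kernel of his orientation of the line graph) that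
multigraph can be coloured from any lists of size `k` so that each class is again a matching;
merging the copies back, every class is `(g, h)`-orientable and so has degree at most `f`.
-/

open Classical

noncomputable section

namespace MG

variable {V : Type} {E : Type} [Fintype V] [Fintype E] [DecidableEq V]

/-- The number of times vertex `v` occurs as an endpoint of the unordered pair `s`
(so a loop at `v` counts twice). -/
def mult (v : V) (s : Sym2 V) : ℕ :=
  Sym2.lift ⟨fun a b => (if a = v then 1 else 0) + (if b = v then 1 else 0),
    fun _ _ => add_comm _ _⟩ s

/-- The degree of a vertex in the multigraph whose edges `E` have endpoints given
by `ends` (loops count twice). -/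
def degree (ends : E → Sym2 V) (v : V) : ℕ := ∑ e : E, mult v (ends e)

/-- Maximum degree `Δ(G)`. -/
def maxDegree (ends : E → Sym2 V) : ℕ := Finset.univ.sup fun v => degree ends v

/-- `e(S)`: the number of edges with all endpoints in `S`. -/
def edgesWithin (ends : E → Sym2 V) (S : Finset V) : ℕ :=
  (Finset.univ.filter fun e => ∀ v ∈ ends e, v ∈ S).card

/-- The degree of `v` in the subgraph induced by `S`. -/
def degreeIn (ends : E → Sym2 V) (S : Finset V) (v : V) : ℕ :=
  ∑ e ∈ Finset.univ.filter (fun e => ∀ u ∈ ends e, u ∈ S), mult v (ends e)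

/-- Adjacency; a vertex with a loop is adjacent to itself. -/
def Adj (ends : E → Sym2 V) (u v : V) : Prop := ∃ e, ends e = s(u, v)

/-- The multigraph has no loops. -/
def Loopless (ends : E → Sym2 V) : Prop := ∀ e, ¬ (ends e).IsDiag

/-- Reachability by walks. -/
def Reaches (ends : E → Sym2 V) (u v : V) : Prop :=
  Relation.ReflTransGen (Adj ends) u v

/-- The connected component of `v`, as a set of vertices. -/
def component (ends : E → Sym2 V) (v : V) : Finset V :=
  Finset.univ.filter fun u => Reaches ends v u

/-- A pseudoforest: every connected component contains at most one cycle
(a loop counts as a cycle); equivalently, every connected component has at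
most as many edges as vertices. -/
def IsPseudoforest (ends : E → Sym2 V) : Prop :=
  ∀ v : V, edgesWithin ends (component ends v) ≤ (component ends v).card

/-- A forest (acyclic multigraph): every connected component has strictly fewer
edges than vertices. -/
def IsForest (ends : E → Sym2 V) : Prop :=
  ∀ v : V, edgesWithin ends (component ends v) + 1 ≤ (component ends v).card

/-- An orientation assigns to each edge an ordered pair of its endpoints
(tail, head). -/
def IsOrientation (ends : E → Sym2 V) (D : E → V × V) : Prop :=
  ∀ e, Sym2.mk (D e).1 (D e).2 = ends e

/-- Indegree of `v` under the orientation `D`. -/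
def inDeg (D : E → V × V) (v : V) : ℕ := (Finset.univ.filter fun e => (D e).2 = v).card

/-- Outdegree of `v` under the orientation `D`. -/
def outDeg (D : E → V × V) (v : V) : ℕ := (Finset.univ.filter fun e => (D e).1 = v).card

/-- `G` is `(g,h)`-orientable: there is an orientation in which every vertex `v`
has indegree at most `g v` and outdegree at most `h v`. -/
def GHOrientable (ends : E → Sym2 V) (g h : V → ℕ∞) : Prop :=
  ∃ D : E → V × V, IsOrientation ends D ∧
    (∀ v, (inDeg D v : ℕ∞) ≤ g v) ∧ (∀ v, (outDeg D v : ℕ∞) ≤ h v)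

/-- `(g,h)` is a valid pair of functions for `G`. -/
def ValidPair (ends : E → Sym2 V) (g h : V → ℕ∞) : Prop :=
  (∀ v : V, 1 ≤ g v + h v) ∧
  (∀ u v : V, Adj ends u v → 1 ≤ g u + g v) ∧
  (∀ u v : V, Adj ends u v → 1 ≤ h u + h v)

/-- The endpoint map of the subgraph consisting of the edges satisfying `P`. -/
def subEnds (ends : E → Sym2 V) (P : E → Prop) : {e // P e} → Sym2 V :=
  fun e => ends e.val

/-- A `(g,h)`-oriented-coloring: each color class is a `(g,h)`-orientable subgraph. -/
def GHColoring (ends : E → Sym2 V) (g h : V → ℕ∞) {k : ℕ} (C : E → Fin k) : Prop :=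
  ∀ c : Fin k, GHOrientable (subEnds ends fun e => C e = c) g h

/-- The `(g,h)`-oriented chromatic index `χ'_{(g,h)}(G)`. -/
def ghChromaticIndex (ends : E → Sym2 V) (g h : V → ℕ∞) : ℕ :=
  sInf {k | ∃ C : E → Fin k, GHColoring ends g h C}

/-- Ceiling division `⌈a/b⌉` on ℕ. -/
def cdiv (a b : ℕ) : ℕ := (a + b - 1) / b

/-- Replace `∞` values of `g` by the maximum degree `Δ(G)`. -/
def trunc (ends : E → Sym2 V) (g : V → ℕ∞) (v : V) : ℕ :=
  WithTop.untopD (maxDegree ends) (g v)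

/-- The weighted maximum degree `Δ_{(g,h)}(G) = max_v ⌈d(v)/(g(v)+h(v))⌉`
(values `∞` of `g, h` replaced by `Δ(G)`). -/
def ghMaxDegree (ends : E → Sym2 V) (g h : V → ℕ∞) : ℕ :=
  Finset.univ.sup fun v => cdiv (degree ends v) (trunc ends g v + trunc ends h v)

/-- The weighted maximum density
`W_{(g,h)}(G) = max_{S, g(S) ≥ 1, h(S) ≥ 1} ⌈e(S)/min{g(S),h(S)}⌉`
(values `∞` of `g, h` replaced by `Δ(G)`). -/
def ghMaxDensity (ends : E → Sym2 V) (g h : V → ℕ∞) : ℕ :=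
  (Finset.univ.filter fun S : Finset V =>
      (1 ≤ ∑ v ∈ S, g v) ∧ (1 ≤ ∑ v ∈ S, h v)).sup
    fun S => cdiv (edgesWithin ends S)
      (min (∑ v ∈ S, trunc ends g v) (∑ v ∈ S, trunc ends h v))

/-- An edge-coloring into pseudoforests. -/
def PaColoring (ends : E → Sym2 V) {k : ℕ} (C : E → Fin k) : Prop :=
  ∀ c : Fin k, IsPseudoforest (subEnds ends fun e => C e = c)

/-- The pseudoarboricity `pa(G)`. -/
def pa (ends : E → Sym2 V) : ℕ := sInf {k | ∃ C : E → Fin k, PaColoring ends C}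

/-- An edge-coloring into degree-`f` pseudoforests. -/
def PafColoring (ends : E → Sym2 V) (f : V → ℕ) {k : ℕ} (C : E → Fin k) : Prop :=
  ∀ c : Fin k, IsPseudoforest (subEnds ends fun e => C e = c) ∧
    ∀ v, degree (subEnds ends fun e => C e = c) v ≤ f v

/-- The degree-`f` pseudoarboricity `pa_f(G)`. -/
def paf (ends : E → Sym2 V) (f : V → ℕ) : ℕ :=
  sInf {k | ∃ C : E → Fin k, PafColoring ends f C}

/-- The weighted maximum degree `Δ_f(G) = max_v ⌈d(v)/f(v)⌉`. -/
def fMaxDegree (ends : E → Sym2 V) (f : V → ℕ) : ℕ :=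
  Finset.univ.sup fun v => cdiv (degree ends v) (f v)

/-- An edge-coloring into degree-`f` forests. -/
def AfColoring (ends : E → Sym2 V) (f : V → ℕ) {k : ℕ} (C : E → Fin k) : Prop :=
  ∀ c : Fin k, IsForest (subEnds ends fun e => C e = c) ∧
    ∀ v, degree (subEnds ends fun e => C e = c) v ≤ f v

/-- The degree-`f` arboricity `a_f(G)`. -/
def af (ends : E → Sym2 V) (f : V → ℕ) : ℕ :=
  sInf {k | ∃ C : E → Fin k, AfColoring ends f C}

/-- The arboricity `a(G)`. -/
def arboricity (ends : E → Sym2 V) : ℕ :=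
  sInf {k | ∃ C : E → Fin k, ∀ c : Fin k, IsForest (subEnds ends fun e => C e = c)}

/-- The linear arboricity `la(G)`: color classes are linear forests, i.e.
degree-2 forests. -/
def la (ends : E → Sym2 V) : ℕ := af ends fun _ => 2

/-- `G` is `k`-degenerate: every (induced, nonempty) subgraph has a vertex of
degree at most `k`. -/
def Degenerate (ends : E → Sym2 V) (k : ℕ) : Prop :=
  ∀ S : Finset V, S.Nonempty → ∃ v ∈ S, degreeIn ends S v ≤ k

/-- An `f`-coloring: in each color class every vertex `v` has degree at most `f v`. -/
def FColoring (ends : E → Sym2 V) (f : V → ℕ) {k : ℕ} (C : E → Fin k) : Prop :=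
  ∀ c : Fin k, ∀ v, degree (subEnds ends fun e => C e = c) v ≤ f v

/-- The `f`-chromatic index `χ'_f(G)`. -/
def fChromaticIndex (ends : E → Sym2 V) (f : V → ℕ) : ℕ :=
  sInf {k | ∃ C : E → Fin k, FColoring ends f C}

/-- `G` is bipartite: the vertices can be split into two sides so that every
edge has one endpoint on each side. -/
def Bipartite (ends : E → Sym2 V) : Prop :=
  ∃ P : V → Prop, ∀ e : E, ∃ u v, ends e = s(u, v) ∧ P u ∧ ¬ P v

/-- The list analogue `χ'_{(g,h),ℓ}(G)`: the least `k` such that every list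
assignment with lists of size at least `k` admits a coloring from the lists in
which each color class is `(g,h)`-orientable. -/
def ghListChromaticIndex (ends : E → Sym2 V) (g h : V → ℕ∞) : ℕ :=
  sInf {k | ∀ L : E → Finset ℕ, (∀ e, k ≤ (L e).card) →
    ∃ C : E → ℕ, (∀ e, C e ∈ L e) ∧
      ∀ c : ℕ, GHOrientable (subEnds ends fun e => C e = c) g h}

/-- The list degree-`f` pseudoarboricity `pa_{f,ℓ}(G)`. -/
def pafList (ends : E → Sym2 V) (f : V → ℕ) : ℕ :=
  sInf {k | ∀ L : E → Finset ℕ, (∀ e, k ≤ (L e).card) →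
    ∃ C : E → ℕ, (∀ e, C e ∈ L e) ∧
      ∀ c : ℕ, IsPseudoforest (subEnds ends fun e => C e = c) ∧
        ∀ v, degree (subEnds ends fun e => C e = c) v ≤ f v}

/-- The list `f`-chromatic index `χ'_{f,ℓ}(G)`. -/
def fListChromaticIndex (ends : E → Sym2 V) (f : V → ℕ) : ℕ :=
  sInf {k | ∀ L : E → Finset ℕ, (∀ e, k ≤ (L e).card) →
    ∃ C : E → ℕ, (∀ e, C e ∈ L e) ∧
      ∀ c : ℕ, ∀ v, degree (subEnds ends fun e => C e = c) v ≤ f v}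

end MG

open Finset Function

section KernelPerfect

variable {F : Type*}

def IsKernel (D : F → F → Prop) (S K : Finset F) : Prop :=
  K ⊆ S ∧ (∀ m ∈ K, ∀ m' ∈ K, ¬ D m m') ∧ ∀ e ∈ S, e ∉ K → ∃ m ∈ K, D m e

/-- The Bondy–Boppana–Siegel lemma on kernel-perfect digraphs. -/
theorem exists_listColoring_of_isKernel (D : F → F → Prop) (hD : ∀ S, ∃ K, IsKernel D S K)
    (S : Finset F) (L : F → Finset ℕ) (hL : ∀ e ∈ S, #{m ∈ S | D m e} < #(L e)) :
    ∃ C : F → ℕ, (∀ e ∈ S, C e ∈ L e) ∧ ∀ e ∈ S, ∀ e' ∈ S, D e e' → C e ≠ C e' := by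
  induction S using Finset.strongInduction generalizing L with
  | H S ih =>
  rcases S.eq_empty_or_nonempty with rfl | ⟨e₀, he₀⟩
  · exact ⟨fun _ => 0, by simp, by simp⟩
  obtain ⟨a, ha⟩ : (L e₀).Nonempty := card_pos.mp (Nat.zero_lt_of_lt (hL e₀ he₀))
  obtain ⟨K, hKS, hKind, hKabs⟩ := hD {e ∈ S | a ∈ L e}
  have hK : K.Nonempty := by
    by_cases h : e₀ ∈ K
    · exact ⟨e₀, h⟩
    · obtain ⟨m, hm, -⟩ := hKabs e₀ (mem_filter.mpr ⟨he₀, ha⟩) h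
      exact ⟨m, hm⟩
  have hKS' : K ⊆ S := hKS.trans (filter_subset _ _)
  -- Colour the kernel `K` with `a`, and the rest from the lists with `a` removed.
  have hL' : ∀ e ∈ S \ K, #{m ∈ S \ K | D m e} < #((L e).erase a) := by
    intro e he
    obtain ⟨heS, heK⟩ := mem_sdiff.mp he
    have hsub : {m ∈ S \ K | D m e} ⊆ {m ∈ S | D m e} := filter_subset_filter _ sdiff_subset
    by_cases hae : a ∈ L e
    · obtain ⟨m, hmK, hme⟩ := hKabs e (mem_filter.mpr ⟨heS, hae⟩) heK
      have hlt : #{m ∈ S \ K | D m e} < #{m ∈ S | D m e} :=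
        card_lt_card <| (ssubset_iff_of_subset hsub).mpr
          ⟨m, mem_filter.mpr ⟨hKS' hmK, hme⟩, fun h => (mem_sdiff.mp (mem_filter.mp h).1).2 hmK⟩
      have := hL e heS
      rw [card_erase_of_mem hae]
      omega
    · rw [erase_eq_of_notMem hae]
      exact (card_le_card hsub).trans_lt (hL e heS)
  obtain ⟨C, hCL, hC⟩ := ih (S \ K) (sdiff_ssubset hKS' hK) _ hL'
  refine ⟨fun e => if e ∈ K then a else C e, fun e he => ?_, fun e he e' he' hee' => ?_⟩
  · by_cases heK : e ∈ K
    · simpa [heK] using (mem_filter.mp (hKS heK)).2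
    · simpa [heK] using mem_of_mem_erase (hCL e (mem_sdiff.mpr ⟨he, heK⟩))
  · by_cases heK : e ∈ K <;> by_cases he'K : e' ∈ K <;> simp only [heK, he'K, if_true, if_false]
    · exact absurd hee' (hKind e heK e' he'K)
    · exact fun h => notMem_erase a (L e') (h ▸ hCL e' (mem_sdiff.mpr ⟨he', he'K⟩))
    · exact fun h => notMem_erase a (L e) (h.symm ▸ hCL e (mem_sdiff.mpr ⟨he, heK⟩))
    · exact hC e (mem_sdiff.mpr ⟨he, heK⟩) e' (mem_sdiff.mpr ⟨he', he'K⟩) hee'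

end KernelPerfect

namespace Galvin

variable {F W₁ W₂ : Type*} (l : F → W₁) (r : F → W₂) {k : ℕ} (c : F → Fin k)

/-- Galvin's orientation of the line graph of the bipartite multigraph with edges `F` and
end maps `l`, `r`. -/
def Dominates (m e : F) : Prop := l m = l e ∧ c m < c e ∨ r m = r e ∧ c e < c m

/-- Gale–Shapley: every set of edges contains a stable matching. -/
theorem exists_isKernel (S : Finset F) : ∃ K, IsKernel (Dominates l r c) S K := by
  induction S using Finset.strongInduction with
  | H S ih =>
  set Mins := {m ∈ S | ∀ e ∈ S, l e = l m → c m ≤ c e}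
  by_cases hrej : ∃ e ∈ S, ∃ m ∈ Mins, r m = r e ∧ c e < c m
  · -- `e` is rejected by `m` at its right end; a kernel without `e` still absorbs it.
    obtain ⟨e, heS, m, hm, hmr, hem⟩ := hrej
    obtain ⟨hmS, hmin⟩ := mem_filter.mp hm
    obtain ⟨K, hKS, hKind, hKabs⟩ := ih (S.erase e) (erase_ssubset heS)
    refine ⟨K, hKS.trans (erase_subset _ _), hKind, fun x hx hxK => ?_⟩
    rcases eq_or_ne x e with rfl | hxe
    · by_cases hmK : m ∈ K
      · exact ⟨m, hmK, Or.inr ⟨hmr, hem⟩⟩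
      obtain ⟨m', hm'K, hm'⟩ := hKabs m (mem_erase.mpr ⟨fun h => (h ▸ hem).false, hmS⟩) hmK
      rcases hm' with ⟨hl, hlt⟩ | ⟨hr, hlt⟩
      · exact absurd (hmin m' (mem_of_mem_erase (hKS hm'K)) hl) (not_le.mpr hlt)
      · exact ⟨m', hm'K, Or.inr ⟨hr.trans hmr, hem.trans hlt⟩⟩
    · exact hKabs x (mem_erase.mpr ⟨hxe, hx⟩) hxK
  · simp only [not_exists, not_and, not_lt] at hrej
    refine ⟨Mins, filter_subset _ _, fun m hm m' hm' hdom => ?_, fun e heS heM => ?_⟩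
    · obtain ⟨hmS, -⟩ := mem_filter.mp hm
      obtain ⟨hm'S, hm'min⟩ := mem_filter.mp hm'
      rcases hdom with ⟨hl, hlt⟩ | ⟨hr, hlt⟩
      · exact absurd (hm'min m hmS hl) (not_le.mpr hlt)
      · exact absurd (hrej m' hm'S m hm hr) (not_le.mpr hlt)
    · obtain ⟨m, hm, hmin⟩ := exists_min_image {x ∈ S | l x = l e} c ⟨e, mem_filter.mpr ⟨heS, rfl⟩⟩
      obtain ⟨hmS, hml⟩ := mem_filter.mp hm
      have hmM : m ∈ Mins := mem_filter.mpr ⟨hmS, fun x hx hxl =>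
        hmin x (mem_filter.mpr ⟨hx, hxl.trans hml⟩)⟩
      obtain ⟨x, hxS, hxl, hxe⟩ : ∃ x ∈ S, l x = l e ∧ c x < c e := by
        simpa [Mins, heS] using heM
      exact ⟨m, hmM, Or.inl ⟨hml, (hmin x (mem_filter.mpr ⟨hxS, hxl⟩)).trans_lt hxe⟩⟩

theorem injective_of_ne_of_lt {W α : Type*} {t : F → W} {C : F → α}
    (ht : Injective fun e => (t e, c e)) (hC : ∀ e e', t e = t e' → c e < c e' → C e ≠ C e') :
    Injective fun e => (t e, C e) := fun e e' h => by
  obtain ⟨h₁, h₂⟩ := Prod.ext_iff.mp h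
  rcases lt_trichotomy (c e) (c e') with hlt | heq | hlt
  · exact absurd h₂ (hC e e' h₁ hlt)
  · exact ht (Prod.ext h₁ heq)
  · exact absurd h₂.symm (hC e' e h₁.symm hlt)

variable [Fintype F]

theorem card_dominators_lt (hl : Injective fun e => (l e, c e))
    (hr : Injective fun e => (r e, c e)) (e : F) : #{m | Dominates l r c m e} < k := by
  have hleft : #{m | l m = l e ∧ c m < c e} ≤ #(Iio (c e)) :=
    card_le_card_of_injOn c (fun m hm => by simpa using (mem_filter.mp hm).2.2)
      fun m hm m' hm' h =>
        hl (Prod.ext ((mem_filter.mp hm).2.1.trans (mem_filter.mp hm').2.1.symm) h)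
  have hright : #{m | r m = r e ∧ c e < c m} ≤ #(Ioi (c e)) :=
    card_le_card_of_injOn c (fun m hm => by simpa using (mem_filter.mp hm).2.2)
      fun m hm m' hm' h =>
        hr (Prod.ext ((mem_filter.mp hm).2.1.trans (mem_filter.mp hm').2.1.symm) h)
  rw [Fin.card_Iio] at hleft
  rw [Fin.card_Ioi] at hright
  have := (c e).isLt
  calc #{m | Dominates l r c m e}
      ≤ #{m | l m = l e ∧ c m < c e} + #{m | r m = r e ∧ c e < c m} := by
        rw [← card_union_of_disjoint ?_]
        · exact card_le_card fun m hm => by simpa [Dominates] using (mem_filter.mp hm).2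
        · exact disjoint_filter.mpr fun m _ h1 h2 => (h1.2.trans h2.2).false
    _ < k := by omega

/-- **Galvin's theorem**: in a bipartite multigraph with edge ends `l`, `r`, a proper
`k`-edge-colouring yields a proper edge colouring from any lists of size `k`. -/
theorem exists_listColoring (hl : Injective fun e => (l e, c e))
    (hr : Injective fun e => (r e, c e)) (L : F → Finset ℕ) (hL : ∀ e, k ≤ #(L e)) :
    ∃ C : F → ℕ, (∀ e, C e ∈ L e) ∧
      (Injective fun e => (l e, C e)) ∧ Injective fun e => (r e, C e) := by
  obtain ⟨C, hCL, hC⟩ := exists_listColoring_of_isKernel (Dominates l r c) (exists_isKernel l r c)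
    univ L fun e _ => by simpa using (card_dominators_lt l r c hl hr e).trans_le (hL e)
  have hC' : ∀ e e', Dominates l r c e e' → C e ≠ C e' :=
    fun e e' => hC e (mem_univ e) e' (mem_univ e')
  exact ⟨C, fun e => hCL e (mem_univ e),
    injective_of_ne_of_lt c hl fun e e' h hlt => hC' e e' (Or.inl ⟨h, hlt⟩),
    injective_of_ne_of_lt c hr fun e e' h hlt => (hC' e' e (Or.inr ⟨h.symm, hlt⟩)).symm⟩

end Galvin

namespace MG

section Coloring

variable {V F : Type} [DecidableEq V] [Fintype F]

theorem card_filter_subtype (P Q : F → Prop) [DecidablePred P] [DecidablePred Q] :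
    #{x : {e // P e} | Q x} = #{e | P e ∧ Q e} := by
  simp only [card_filter]
  rw [← sum_subtype {e | P e} (by simp) fun e => if Q e then 1 else 0, sum_filter]
  exact sum_congr rfl fun e _ => by by_cases hP : P e <;> simp [hP]

theorem degree_subEnds (H : F → Sym2 V) (P : F → Prop) [DecidablePred P] (v : V) :
    degree (subEnds H P) v = ∑ e with P e, mult v (H e) := by
  unfold degree subEnds
  exact (sum_subtype (p := P) {e | P e} (by simp) fun e => mult v (H e)).symm

section Orientation

variable {H : F → Sym2 V} {D : F → V × V}

theorem inDeg_add_outDeg (hD : IsOrientation H D) (v : V) :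
    inDeg D v + outDeg D v = degree H v := by
  simp only [inDeg, outDeg, degree, card_filter, ← sum_add_distrib]
  exact sum_congr rfl fun e _ => by rw [← hD e]; exact add_comm _ _

theorem inDeg_le_degree (hD : IsOrientation H D) (v : V) : inDeg D v ≤ degree H v :=
  (Nat.le_add_right _ _).trans (inDeg_add_outDeg hD v).le

theorem outDeg_le_degree (hD : IsOrientation H D) (v : V) : outDeg D v ≤ degree H v :=
  (Nat.le_add_left _ _).trans (inDeg_add_outDeg hD v).le

theorem degree_le_of_ghOrientable {g h : V → ℕ∞} {f : V → ℕ} (hH : GHOrientable H g h)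
    (hf : ∀ v, g v + h v ≤ f v) (v : V) : degree H v ≤ f v := by
  obtain ⟨D, hD, hin, hout⟩ := hH
  have : (degree H v : ℕ∞) ≤ f v := by
    rw [← inDeg_add_outDeg hD, Nat.cast_add]
    exact (add_le_add (hin v) (hout v)).trans (hf v)
  exact_mod_cast this

theorem inDeg_restrict (P : F → Prop) [DecidablePred P] (v : V) :
    inDeg (fun x : {e // P e} => D x) v = #{e | P e ∧ (D e).2 = v} :=
  card_filter_subtype P fun e => (D e).2 = v

theorem outDeg_restrict (P : F → Prop) [DecidablePred P] (v : V) :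
    outDeg (fun x : {e // P e} => D x) v = #{e | P e ∧ (D e).1 = v} :=
  card_filter_subtype P fun e => (D e).1 = v

end Orientation

theorem ghOrientable_of_crossing {H : F → Sym2 V} {P : V → Prop}
    (hP : ∀ e, ∃ u w, H e = s(u, w) ∧ P u ∧ ¬ P w) {f : V → ℕ} (hf : ∀ v, degree H v ≤ f v) :
    GHOrientable H (fun v => if P v then 0 else (f v : ℕ∞))
      (fun v => if P v then (f v : ℕ∞) else 0) := by
  choose u w hH hu hw using hP
  have hD : IsOrientation H fun e => (u e, w e) := fun e => (hH e).symm
  refine ⟨_, hD, fun v => ?_, fun v => ?_⟩ <;> dsimp only <;> split_ifs with hv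
  · rw [inDeg, card_eq_zero.mpr (filter_eq_empty_iff.mpr fun e _ (he : w e = v) => hw e (he ▸ hv))]
    exact zero_le
  · exact_mod_cast (inDeg_le_degree hD v).trans (hf v)
  · exact_mod_cast (outDeg_le_degree hD v).trans (hf v)
  · rw [outDeg, card_eq_zero.mpr (filter_eq_empty_iff.mpr fun e _ (he : u e = v) => hv (he ▸ hu e))]
    exact zero_le

theorem card_le_of_injOn_lt {α : Type*} {s : α → ℕ} {T : Finset α} {N : ℕ∞}
    (hs : ∀ e ∈ T, (s e : ℕ∞) < N) (hinj : Set.InjOn s T) : (#T : ℕ∞) ≤ N := by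
  induction N using ENat.recTopCoe with
  | top => exact le_top
  | coe n =>
    exact_mod_cast (card_le_card_of_injOn s (fun e he => mem_range.mpr (by exact_mod_cast hs e he))
      hinj).trans (card_range n).le

theorem exists_rank {κ : Type} [DecidableEq κ] (key : F → κ) :
    ∃ s : F → ℕ, (∀ e, s e < #{x | key x = key e}) ∧ Injective fun e => (key e, s e) := by
  let φ (y : κ) : {x // key x = y} ≃ Fin #{x | key x = y} :=
    Fintype.equivFinOfCardEq (Fintype.card_subtype _)
  have hφ : ∀ y (x : {x // key x = y}), (φ y x : ℕ) = φ (key x) ⟨x, rfl⟩ := by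
    rintro _ ⟨x, rfl⟩
    rfl
  refine ⟨fun e => φ (key e) ⟨e, rfl⟩, fun e => (φ (key e) _).isLt, fun e e' h => ?_⟩
  obtain ⟨hkey, hs⟩ := Prod.ext_iff.mp h
  have := hφ (key e') ⟨e, hkey⟩
  exact congrArg Subtype.val ((φ (key e')).injective (Fin.ext (this.trans hs)))

section Split

variable {ι : Type} [DecidableEq ι]

def BoundedAt (t : F → V) (B : V → ℕ∞) (c : F → ι) : Prop :=
  ∀ i v, (#{e | c e = i ∧ t e = v} : ℕ∞) ≤ B v

/-- `s e` numbers `e` within its colour class at its `t`-end, so the pairs `(t e, s e)` are at most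
`B v` copies of each vertex `v`, and each colour class is a matching at the copies. -/
theorem BoundedAt.exists_split {t : F → V} {B : V → ℕ∞} {c : F → ι} (hc : BoundedAt t B c) :
    ∃ s : F → ℕ, (Injective fun e => ((t e, s e), c e)) ∧
      ∀ C : F → ℕ, (Injective fun e => ((t e, s e), C e)) → BoundedAt t B C := by
  obtain ⟨s, hs, hinj⟩ := exists_rank fun e => (t e, c e)
  have hsB : ∀ e, (s e : ℕ∞) < B (t e) := fun e => by
    have hfiber : #{x | (t x, c x) = (t e, c e)} = #{x | c x = c e ∧ t x = t e} := by
      congr 1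
      ext x
      simp [Prod.ext_iff, and_comm]
    calc (s e : ℕ∞) < #{x | (t x, c x) = (t e, c e)} := by exact_mod_cast hs e
      _ ≤ B (t e) := hfiber ▸ hc (c e) (t e)
  refine ⟨s, fun e e' h => hinj ?_, fun C hC i v => card_le_of_injOn_lt (s := s) ?_ ?_⟩
  · simp_all [Prod.ext_iff]
  · intro e he
    simpa [(mem_filter.mp he).2.2] using hsB e
  · intro e he e' he' h
    have he := (mem_filter.mp he).2
    have he' := (mem_filter.mp he').2
    exact hC (by simp [he.1, he'.1, he.2, he'.2, h])

end Split

theorem exists_boundedAt_of_ghColoring {E : Type} [Fintype E] {ends : E → Sym2 V} {g h : V → ℕ∞}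
    {k : ℕ} {C : E → Fin k} (hC : GHColoring ends g h C) :
    ∃ D : E → V × V, IsOrientation ends D ∧
      BoundedAt (fun e => (D e).2) g C ∧ BoundedAt (fun e => (D e).1) h C := by
  choose D hD hin hout using hC
  have hrestrict : ∀ i, (fun x : {e // C e = i} => D (C x) ⟨x, rfl⟩) = D i := by
    intro i
    funext ⟨x, hx⟩
    subst hx
    rfl
  refine ⟨fun e => D (C e) ⟨e, rfl⟩, fun e => hD (C e) ⟨e, rfl⟩, fun i v => ?_, fun i v => ?_⟩
  · rw [← inDeg_restrict (D := fun e => D (C e) ⟨e, rfl⟩), hrestrict]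
    exact hin i v
  · rw [← outDeg_restrict (D := fun e => D (C e) ⟨e, rfl⟩), hrestrict]
    exact hout i v

theorem ghOrientable_of_boundedAt {H : F → Sym2 V} {D : F → V × V} (hD : IsOrientation H D)
    {g h : V → ℕ∞} {C : F → ℕ} (hin : BoundedAt (fun e => (D e).2) g C)
    (hout : BoundedAt (fun e => (D e).1) h C) (i : ℕ) :
    GHOrientable (subEnds H fun e => C e = i) g h :=
  ⟨fun x => D x, fun x => hD x, fun v => by rw [inDeg_restrict]; exact hin i v,
    fun v => by rw [outDeg_restrict]; exact hout i v⟩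

theorem exists_ghOrientable_listColoring {E : Type} [Fintype E] (ends : E → Sym2 V)
    {g h : V → ℕ∞} {k : ℕ} {C₀ : E → Fin k} (hC₀ : GHColoring ends g h C₀)
    (L : E → Finset ℕ) (hL : ∀ e, k ≤ #(L e)) :
    ∃ C : E → ℕ, (∀ e, C e ∈ L e) ∧ ∀ i, GHOrientable (subEnds ends fun e => C e = i) g h := by
  obtain ⟨D, hD, hin, hout⟩ := exists_boundedAt_of_ghColoring hC₀
  obtain ⟨sl, hsl, hslC⟩ := hout.exists_split
  obtain ⟨sr, hsr, hsrC⟩ := hin.exists_split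
  obtain ⟨C, hCL, hCl, hCr⟩ := Galvin.exists_listColoring _ _ C₀ hsl hsr L hL
  exact ⟨C, hCL, ghOrientable_of_boundedAt hD (hsrC C hCr) (hslC C hCl)⟩

end Coloring

section Trail

variable {V F : Type} {D : F → V × V}

inductive IsTrail (D : F → V × V) : V → Finset F → V → Prop
  | nil (u : V) : IsTrail D u ∅ u
  | cons {e : F} {P : Finset F} {v : V} :
      e ∉ P → IsTrail D (D e).2 P v → IsTrail D (D e).1 (insert e P) v

theorem IsTrail.exists_of_mem {u v : V} {P : Finset F} {e : F} (hP : IsTrail D u P v)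
    (he : e ∈ P) : ∃ Q, IsTrail D (D e).1 Q v := by
  induction hP with
  | nil => simp at he
  | cons he' hP ih =>
    rcases mem_insert.mp he with rfl | he
    · exact ⟨_, .cons he' hP⟩
    · exact ih he

theorem exists_isTrail {u v : V}
    (h : Relation.ReflTransGen (fun x y => ∃ e, D e = (x, y)) u v) : ∃ P, IsTrail D u P v := by
  induction h using Relation.ReflTransGen.head_induction_on with
  | refl => exact ⟨∅, .nil v⟩
  | @head a c hac _ ih =>
    obtain ⟨e, he⟩ := hac
    obtain ⟨P, hP⟩ := ih
    obtain ⟨rfl, rfl⟩ : (D e).1 = a ∧ (D e).2 = c := Prod.ext_iff.mp he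
    by_cases heP : e ∈ P
    · exact hP.exists_of_mem heP
    · exact ⟨_, .cons heP hP⟩

def reverseOn (D : F → V × V) (P : Finset F) (e : F) : V × V :=
  if e ∈ P then (D e).swap else D e

theorem IsOrientation.reverseOn {H : F → Sym2 V} (hD : IsOrientation H D) (P : Finset F) :
    IsOrientation H (reverseOn D P) := fun e => by
  unfold MG.reverseOn
  split_ifs
  · exact Sym2.eq_swap.trans (hD e)
  · exact hD e

end Trail

section Excess

variable {V F : Type} [DecidableEq V] {D : F → V × V}

def arcExcess (p : V × V) (w : V) : ℤ := (if p.2 = w then 1 else 0) - if p.1 = w then 1 else 0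

theorem IsTrail.sum_arcExcess {u v : V} {P : Finset F} (hP : IsTrail D u P v) (w : V) :
    ∑ e ∈ P, arcExcess (D e) w = (if v = w then 1 else 0) - if u = w then 1 else 0 := by
  induction hP with
  | nil => simp
  | cons he _ ih =>
    rw [sum_insert he, ih, arcExcess]
    ring

variable [Fintype F]

def excess (D : F → V × V) (w : V) : ℤ := inDeg D w - outDeg D w

theorem excess_eq_sum (D : F → V × V) (w : V) : excess D w = ∑ e, arcExcess (D e) w := by
  rw [excess, inDeg, outDeg, card_filter, card_filter]
  push_cast
  rw [← sum_sub_distrib]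
  rfl

theorem excess_reverseOn (D : F → V × V) (P : Finset F) (w : V) :
    excess (reverseOn D P) w = excess D w - 2 * ∑ e ∈ P, arcExcess (D e) w := by
  have hterm : ∀ e, arcExcess (reverseOn D P e) w =
      arcExcess (D e) w - 2 * if e ∈ P then arcExcess (D e) w else 0 := fun e => by
    unfold reverseOn
    split_ifs
    · simp only [arcExcess, Prod.fst_swap, Prod.snd_swap]
      ring
    · ring
  simp only [excess_eq_sum, hterm, sum_sub_distrib, ← mul_sum, sum_ite_mem, univ_inter]

theorem excess_swap (D : F → V × V) (w : V) : excess (Prod.swap ∘ D) w = -excess D w :=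
  (neg_sub _ _).symm

/-- Each arc contributes `[head ∈ R] - [tail ∈ R] ≤ 0`. -/
theorem sum_excess_nonpos {R : Finset V} (hR : ∀ e, (D e).2 ∈ R → (D e).1 ∈ R) :
    ∑ x ∈ R, excess D x ≤ 0 := by
  simp only [excess_eq_sum]
  rw [sum_comm]
  refine sum_nonpos fun e _ => ?_
  simp only [arcExcess, sum_sub_distrib, sum_ite_eq]
  have := hR e
  split_ifs <;> simp_all

end Excess

section Balanced

variable {V F : Type} [DecidableEq V] [Fintype F] [Fintype V] {D : F → V × V}

def imbalance (D : F → V × V) : ℤ := ∑ v, excess D v ^ 2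

theorem imbalance_reverseOn_lt {u v : V} {P : Finset F} (hP : IsTrail D u P v)
    (hu : excess D u < 0) (hv : 1 < excess D v) : imbalance (reverseOn D P) < imbalance D := by
  have huv : u ≠ v := by
    rintro rfl
    omega
  have hexcess : ∀ w, excess (reverseOn D P) w =
      excess D w - 2 * ((if v = w then 1 else 0) - if u = w then 1 else 0) := fun w => by
    rw [excess_reverseOn, hP.sum_arcExcess]
  refine sum_lt_sum (fun w _ => ?_) ⟨v, mem_univ v, ?_⟩
  · rw [hexcess]
    split_ifs with hvw huw huw
    · exact absurd (huw.trans hvw.symm) huv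
    · subst hvw
      nlinarith
    · subst huw
      nlinarith
    · simp
  · rw [hexcess, if_pos rfl, if_neg huv]
    nlinarith

/-- If some vertex `v` had excess at least two, some `u` reaching `v` would have negative
excess, and reversing a trail from `u` to `v` would lower the imbalance. -/
theorem excess_le_one_of_isMin {H : F → Sym2 V} (hD : IsOrientation H D)
    (hmin : ∀ D', IsOrientation H D' → imbalance D ≤ imbalance D') (v : V) : excess D v ≤ 1 := by
  by_contra! hv
  set R : Finset V := {x | Relation.ReflTransGen (fun x y => ∃ e, D e = (x, y)) x v}
  have hR : ∑ x ∈ R, excess D x ≤ 0 := sum_excess_nonpos fun e he => by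
    simpa [R] using Relation.ReflTransGen.head ⟨e, rfl⟩ (mem_filter.mp he).2
  obtain ⟨u, huR, hu⟩ : ∃ u ∈ R, excess D u < 0 := by
    by_contra! h
    have := single_le_sum h (mem_filter.mpr ⟨mem_univ v, .refl⟩)
    omega
  obtain ⟨P, hP⟩ := exists_isTrail (mem_filter.mp huR).2
  exact (hmin _ (hD.reverseOn P)).not_gt (imbalance_reverseOn_lt hP hu hv)

theorem exists_balanced_orientation (H : F → Sym2 V) :
    ∃ D : F → V × V, IsOrientation H D ∧
      ∀ v, 2 * inDeg D v ≤ degree H v + 1 ∧ 2 * outDeg D v ≤ degree H v + 1 := by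
  have hne : ({D | IsOrientation H D} : Finset (F → V × V)).Nonempty := by
    have : ∀ e, ∃ p : V × V, s(p.1, p.2) = H e := fun e =>
      Sym2.inductionOn (H e) fun x y => ⟨(x, y), rfl⟩
    choose D hD using this
    exact ⟨D, mem_filter.mpr ⟨mem_univ D, hD⟩⟩
  obtain ⟨D, hD, hmin⟩ := exists_min_image _ imbalance hne
  replace hD : IsOrientation H D := (mem_filter.mp hD).2
  replace hmin : ∀ D', IsOrientation H D' → imbalance D ≤ imbalance D' :=
    fun D' hD' => hmin D' (mem_filter.mpr ⟨mem_univ D', hD'⟩)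
  have hswap : IsOrientation H (Prod.swap ∘ D) := fun e => Sym2.eq_swap.trans (hD e)
  have himb : imbalance (Prod.swap ∘ D) = imbalance D := by
    simp only [imbalance, excess_swap, neg_sq]
  refine ⟨D, hD, fun v => ?_⟩
  have h₁ := excess_le_one_of_isMin hD hmin v
  have h₂ := excess_le_one_of_isMin hswap (himb ▸ hmin) v
  have h₃ := inDeg_add_outDeg hD v
  rw [excess_swap] at h₂
  simp only [excess] at h₁ h₂
  omega

theorem ghOrientable_half {H : F → Sym2 V} {f : V → ℕ} (hf_even : ∀ v, Even (f v))
    (hf : ∀ v, degree H v ≤ f v) :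
    GHOrientable H (fun v => (f v / 2 : ℕ)) (fun v => (f v / 2 : ℕ)) := by
  obtain ⟨D, hD, hbal⟩ := exists_balanced_orientation H
  have hhalf : ∀ v, inDeg D v ≤ f v / 2 ∧ outDeg D v ≤ f v / 2 := fun v => by
    have := hbal v
    have := hf v
    obtain ⟨m, hm⟩ := hf_even v
    omega
  exact ⟨D, hD, fun v => ENat.natCast_le_natCast.mpr (hhalf v).1,
    fun v => ENat.natCast_le_natCast.mpr (hhalf v).2⟩

end Balanced

theorem exists_fColoring_of_listColoring {V E : Type} [DecidableEq V] [Fintype E]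
    (ends : E → Sym2 V) (f : V → ℕ) {k : ℕ}
    (hk : ∀ L : E → Finset ℕ, (∀ e, k ≤ #(L e)) → ∃ C : E → ℕ, (∀ e, C e ∈ L e) ∧
      ∀ c : ℕ, ∀ v, degree (subEnds ends fun e => C e = c) v ≤ f v) :
    ∃ C : E → Fin k, FColoring ends f C := by
  obtain ⟨C, hCL, hC⟩ := hk (fun _ => range k) fun _ => (card_range k).ge
  have hCk : ∀ e, C e < k := fun e => mem_range.mp (hCL e)
  refine ⟨fun e => ⟨C e, hCk e⟩, fun i v => ?_⟩
  have := hC i v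
  rw [degree_subEnds] at this ⊢
  convert this using 2
  ext e
  simp [Fin.ext_iff]

theorem fListChromaticIndex_eq_general {V E : Type} [Fintype V] [Fintype E] [DecidableEq V]
    (ends : E → Sym2 V) (f : V → ℕ)
    (hcase : Bipartite ends ∨ ∀ v, Even (f v)) :
    fListChromaticIndex ends f = fChromaticIndex ends f := by
  unfold fListChromaticIndex fChromaticIndex
  congr 1
  ext k
  refine ⟨exists_fColoring_of_listColoring ends f, fun ⟨C₀, hC₀⟩ L hL => ?_⟩
  obtain ⟨g, h, hgh, hC₀'⟩ :
      ∃ g h : V → ℕ∞, (∀ v, g v + h v ≤ f v) ∧ GHColoring ends g h C₀ := by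
    rcases hcase with ⟨P, hP⟩ | hf_even
    · refine ⟨_, _, fun v => ?_, fun i =>
        ghOrientable_of_crossing (fun e : {e // C₀ e = i} => hP e) (hC₀ i)⟩
      split_ifs <;> simp
    · refine ⟨_, _, fun v => ?_, fun i => ghOrientable_half hf_even (hC₀ i)⟩
      norm_cast
      omega
  obtain ⟨C, hCL, hC⟩ := exists_ghOrientable_listColoring ends hC₀' L hL
  exact ⟨C, hCL, fun c => degree_le_of_ghOrientable (hC c) hgh⟩

/-- for every multigraph `G` and `f` with `f(v) ≥ 1` everywhere, if
`G` is bipartite or `f(v)` is even for all `v`, then `χ'_{f,ℓ}(G) = χ'_f(G)`. -/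
theorem fListChromaticIndex_eq {V E : Type} [Fintype V] [Fintype E] [DecidableEq V]
    (ends : E → Sym2 V) (f : V → ℕ) (hf : ∀ v, 1 ≤ f v)
    (hcase : Bipartite ends ∨ ∀ v, Even (f v)) :
    fListChromaticIndex ends f = fChromaticIndex ends f :=
  fListChromaticIndex_eq_general ends f hcase

end MG
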